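/- For the weight Δ₊(x) on (iℝ)ⁿ with n=1, the function c₀(x)Δ(x) = c₀(x)c₊(x)Δ₊(x) is invariant under x₁ ↦ 1 - x₁ (the affine reflection s₀), where Δ(x) = c₊(x)Δ₊(x); more generally for each i ∈ [0,n] the function c_i(x)Δ(x) is invariant under s_i. -/

import Mathlib

noncomputable section

/-- Γ(u+v)Γ(u−v). -/
def Gpm (u v : ℂ) : ℂ := Complex.Gamma (u + v) * Complex.Gamma (u - v)

/-- The weight Δ₊(x) = ∏_{j<k} Γ(t±x_j±x_k)/Γ(±x_j±x_k) ∏_j Γ(a±x_j)Γ(b±x_j)Γ(c±x_j)Γ(d±x_j)/Γ(±2x_j). -/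
def Dplus (n : ℕ) (a b c d t : ℂ) (x : Fin n → ℂ) : ℂ :=
  (∏ j, ∏ k ∈ Finset.Ioi j,
      (Gpm (t + x j) (x k) * Gpm (t - x j) (x k))
        / (Gpm (x j) (x k) * Gpm (-(x j)) (x k))) *
    ∏ j, (Gpm a (x j) * Gpm b (x j) * Gpm c (x j) * Gpm d (x j))
          / (Complex.Gamma (2 * x j) * Complex.Gamma (-(2 * x j)))

/-- c₊(x) = ∏_{j<k} ((t−x_j+x_k)(t−x_j−x_k))/((x_k+x_j)(x_k−x_j)) ∏_j ((a−x_j)(b−x_j))/(−2x_j). -/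
def cplus (n : ℕ) (a b t : ℂ) (x : Fin n → ℂ) : ℂ :=
  (∏ j, ∏ k ∈ Finset.Ioi j,
      ((t - x j + x k) * (t - x j - x k)) / ((x k + x j) * (x k - x j))) *
    ∏ j, ((a - x j) * (b - x j)) / (-2 * x j)

/-- Δ = c₊ Δ₊. -/
def Dfull (n : ℕ) (a b c d t : ℂ) (x : Fin n → ℂ) : ℂ :=
  cplus n a b t x * Dplus n a b c d t x


/-! Δ factors as `∏_{j<k} F(x_j, x_k) · ∏_j G(x_j)`. An adjacent
transposition only reverses the factor of the swapped pair, and `c_i(x) F(x_i, x_{i+1})` is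
symmetric because the Gamma part of `F` is. Changing one coordinate only changes the factors
involving it: for `sₙ` these are even in `xₙ` except for the `c₊` factor, which `cₙ` compensates.
For `s₀`, `Γ(z+1) = zΓ(z)` rewrites `F(u, y)` as `-Γ(t±y+u)Γ(t±y+1-u) / (Γ(±y+u)Γ(±y+1-u))` and
`c₀(u) G(u)` as `∏_{p=a,b,c,d} Γ(p+u)Γ(p+1-u) / (Γ(2u)Γ(2-2u))`, both invariant under
`u ↦ 1 - u`. -/

open Finset Function

section PairProd

variable {α M : Type*} [CommMonoid M] {n : ℕ}

def pairProd (F : α → α → M) (x : Fin n → α) : M :=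
  ∏ j, ∏ k ∈ Ioi j, F (x j) (x k)

theorem pairProd_update (F : α → α → M) (x : Fin n → α) (i : Fin n) :
    ∃ R, ∀ v, pairProd F (update x i v)
      = (∏ l ∈ Iio i, F (x l) v) * (∏ k ∈ Ioi i, F v (x k)) * R := by
  refine ⟨∏ j ∈ univ.erase i, ∏ k ∈ (Ioi j).erase i, F (x j) (x k), fun v => ?_⟩
  have hrow : ∀ j ∈ univ.erase i, ∏ k ∈ Ioi j, F (update x i v j) (update x i v k)
      = (if j < i then F (x j) v else 1) * ∏ k ∈ (Ioi j).erase i, F (x j) (x k) := by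
    intro j hj
    rw [update_of_ne (ne_of_mem_erase hj)]
    split_ifs with hji
    · rw [← mul_prod_erase _ _ (mem_Ioi.2 hji), update_self]
      exact congrArg _ (prod_congr rfl fun k hk => by rw [update_of_ne (ne_of_mem_erase hk)])
    · rw [one_mul, erase_eq_of_notMem fun h => hji (mem_Ioi.1 h)]
      exact prod_congr rfl fun k hk => by
        rw [update_of_ne fun hki : k = i => hji (hki ▸ mem_Ioi.1 hk)]
  have hIio : (univ.erase i).filter (· < i) = Iio i := by
    ext j
    simpa using fun h : j < i => h.ne
  rw [pairProd, ← mul_prod_erase univ _ (mem_univ i), prod_congr rfl hrow, prod_mul_distrib,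
    ← prod_filter, hIio, update_self,
    prod_congr rfl fun k hk => by rw [update_of_ne (mem_Ioi.1 hk).ne']]
  ac_rfl

theorem prod_prod_Ioi_eq_of_succ (f : Fin n → Fin n → M) {i j : Fin n}
    (hij : (i : ℕ) + 1 = j) :
    ∏ l, ∏ k ∈ Ioi l, f l k
      = f i j * (∏ k ∈ Ioi j, f i k) * (∏ k ∈ Ioi j, f j k)
          * ∏ l ∈ (univ.erase i).erase j, ∏ k ∈ Ioi l, f l k := by
  have hji : j ≠ i := Fin.ne_of_val_ne (by omega)
  have hIoi : Ioi i = insert j (Ioi j) := by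
    ext k
    simp only [mem_Ioi, mem_insert, Fin.lt_def, Fin.ext_iff]
    omega
  rw [← mul_prod_erase univ _ (mem_univ i), ← mul_prod_erase _ _ (mem_erase.2 ⟨hji, mem_univ j⟩),
    hIoi, prod_insert notMem_Ioi_self]
  ac_rfl

theorem pairProd_comp_swap_of_succ (F : α → α → M) (x : Fin n → α) {i j : Fin n}
    (hij : (i : ℕ) + 1 = j) :
    ∃ R, pairProd F x = F (x i) (x j) * R ∧
      pairProd F (x ∘ Equiv.swap i j) = F (x j) (x i) * R := by
  have hfix : ∀ k ∈ Ioi j, Equiv.swap i j k = k := fun k hk =>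
    have := Fin.lt_def.1 (mem_Ioi.1 hk)
    Equiv.swap_apply_of_ne_of_ne (Fin.ne_of_val_ne (by omega)) (Fin.ne_of_val_ne (by omega))
  have hfix_prod : ∀ y, ∏ k ∈ Ioi j, F y (x (Equiv.swap i j k)) = ∏ k ∈ Ioi j, F y (x k) :=
    fun y => prod_congr rfl fun k hk => by rw [hfix k hk]
  have hrest : ∀ l ∈ (univ.erase i).erase j,
      ∏ k ∈ Ioi l, F (x (Equiv.swap i j l)) (x (Equiv.swap i j k))
        = ∏ k ∈ Ioi l, F (x l) (x k) := by
    intro l hl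
    have hlj := ne_of_mem_erase hl
    have hli := ne_of_mem_erase (mem_of_mem_erase hl)
    rw [Equiv.swap_apply_of_ne_of_ne hli hlj]
    have hl' : (l : ℕ) ≠ i ∧ (l : ℕ) ≠ j := ⟨Fin.val_ne_of_ne hli, Fin.val_ne_of_ne hlj⟩
    rcases Nat.lt_or_gt_of_ne hl'.1 with hl | hl
    · -- the swap only moves `i` and `j`, which both lie in `Ioi l`
      refine Equiv.Perm.prod_comp _ _ (fun k => F (x l) (x k)) fun k hk => ?_
      obtain ⟨-, rfl | rfl⟩ := Equiv.swap_apply_ne_self_iff.1 hk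
      all_goals rw [coe_Ioi, Set.mem_Ioi, Fin.lt_def]; omega
    · exact prod_congr rfl fun k hk => by
        rw [hfix k (mem_Ioi.2 (Fin.lt_def.2 (by have := Fin.lt_def.1 (mem_Ioi.1 hk); omega)))]
  refine ⟨(∏ k ∈ Ioi j, F (x i) (x k)) * (∏ k ∈ Ioi j, F (x j) (x k))
      * ∏ l ∈ (univ.erase i).erase j, ∏ k ∈ Ioi l, F (x l) (x k), ?_, ?_⟩
  · rw [pairProd, prod_prod_Ioi_eq_of_succ (fun l k => F (x l) (x k)) hij]
    ac_rfl
  · rw [pairProd, prod_prod_Ioi_eq_of_succ (fun l k => F ((x ∘ _) l) ((x ∘ _) k)) hij]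
    simp only [comp_apply, Equiv.swap_apply_left, Equiv.swap_apply_right]
    rw [prod_congr rfl hrest, hfix_prod, hfix_prod]
    ac_rfl

end PairProd

section Gamma

open Complex

theorem Gpm_add_one {u y : ℂ} (h₁ : u + y ≠ 0) (h₂ : u - y ≠ 0) :
    Gpm (u + 1) y = (u + y) * (u - y) * Gpm u y := by
  rw [Gpm, Gpm, show u + 1 + y = u + y + 1 by ring, show u + 1 - y = u - y + 1 by ring,
    Gamma_add_one _ h₁, Gamma_add_one _ h₂]
  ring

theorem sub_mul_Gpm {p v : ℂ} (h : p - v ≠ 0) :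
    (p - v) * Gpm p v = Gamma (p + v) * Gamma (p + (1 - v)) := by
  rw [Gpm, show p + (1 - v) = p - v + 1 by ring, Gamma_add_one _ h]
  ring

theorem Gpm_neg_right (u v : ℂ) : Gpm u (-v) = Gpm u v := by
  rw [Gpm, Gpm, ← sub_eq_add_neg, sub_neg_eq_add, mul_comm]

theorem Gpm_add_mul_Gpm_sub_comm (t u v : ℂ) :
    Gpm (t + u) v * Gpm (t - u) v = Gpm (t + v) u * Gpm (t - v) u := by
  simp only [Gpm]
  ring_nf

theorem mul_Gamma_mul_Gamma_neg {v : ℂ} (h₀ : 2 * v ≠ 0) (h₁ : 2 * v ≠ 1) :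
    (1 - 2 * v) * (-2 * v) * (Gamma (2 * v) * Gamma (-(2 * v)))
      = Gamma (2 * v) * Gamma (2 * (1 - v)) := by
  have e₁ : -2 * v * Gamma (-(2 * v)) = Gamma (1 - 2 * v) := by
    rw [show 1 - 2 * v = -(2 * v) + 1 by ring, Gamma_add_one _ (neg_ne_zero.2 h₀)]
    ring
  have e₂ : (1 - 2 * v) * Gamma (1 - 2 * v) = Gamma (2 * (1 - v)) := by
    rw [show 2 * (1 - v) = 1 - 2 * v + 1 by ring, Gamma_add_one _ (sub_ne_zero.2 h₁.symm)]
  calc _ = Gamma (2 * v) * ((1 - 2 * v) * (-2 * v * Gamma (-(2 * v)))) := by ring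
    _ = _ := by rw [e₁, e₂]

end Gamma

def pairFactor (t u v : ℂ) : ℂ :=
  (t - u + v) * (t - u - v) / ((v + u) * (v - u)) *
    (Gpm (t + u) v * Gpm (t - u) v / (Gpm u v * Gpm (-u) v))

def singleFactor (a b c d v : ℂ) : ℂ :=
  (a - v) * (b - v) / (-2 * v) *
    (Gpm a v * Gpm b v * Gpm c v * Gpm d v /
      (Complex.Gamma (2 * v) * Complex.Gamma (-(2 * v))))

theorem Dfull_eq_pairProd_mul_prod (n : ℕ) (a b c d t : ℂ) (x : Fin n → ℂ) :
    Dfull n a b c d t x = pairProd (pairFactor t) x * ∏ j, singleFactor a b c d (x j) := by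
  simp only [Dfull, cplus, Dplus, pairProd, pairFactor, singleFactor, prod_mul_distrib]
  ring

theorem pairFactor_swap (t u v : ℂ) :
    (t + u - v) / (u - v) * pairFactor t u v = (t + v - u) / (v - u) * pairFactor t v u := by
  have h := Gpm_add_mul_Gpm_sub_comm 0 u v
  simp only [zero_add, zero_sub] at h
  simp only [pairFactor, div_mul_div_comm]
  rw [Gpm_add_mul_Gpm_sub_comm t u v, h]
  ring

theorem pairFactor_neg_right (t u v : ℂ) : pairFactor t u (-v) = pairFactor t u v := by
  simp only [pairFactor, Gpm_neg_right]
  ring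

theorem pairFactor_eq {t u y : ℂ} (h₁ : t - u + y ≠ 0) (h₂ : t - u - y ≠ 0) (h₃ : u + y ≠ 0)
    (h₄ : u - y ≠ 0) :
    pairFactor t u y = -(Gpm (t + u) y * Gpm (t + (1 - u)) y) / (Gpm u y * Gpm (1 - u) y) := by
  have e₁ : (t - u + y) * (t - u - y) * Gpm (t - u) y = Gpm (t + (1 - u)) y := by
    rw [show t + (1 - u) = t - u + 1 by ring, Gpm_add_one h₁ h₂]
  have e₂ : (y + u) * (y - u) * Gpm (-u) y = -Gpm (1 - u) y := by
    rw [show 1 - u = -u + 1 by ring,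
      Gpm_add_one (by contrapose! h₄; linear_combination -h₄) (by contrapose! h₃; linear_combination -h₃)]
    ring
  calc pairFactor t u y
      = (t - u + y) * (t - u - y) * Gpm (t - u) y * Gpm (t + u) y
          / ((y + u) * (y - u) * Gpm (-u) y * Gpm u y) := by
        rw [pairFactor, div_mul_div_comm]; ring
    _ = _ := by rw [e₁, e₂]; ring

theorem pairFactor_one_sub {t u y : ℂ} (h₁ : t - u + y ≠ 0) (h₂ : t - u - y ≠ 0)
    (h₃ : u + y ≠ 0) (h₄ : u - y ≠ 0) (h₅ : t + u + y ≠ 1) (h₆ : t + u - y ≠ 1)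
    (h₇ : u + y ≠ 1) (h₈ : u - y ≠ 1) :
    pairFactor t (1 - u) y = pairFactor t u y := by
  rw [pairFactor_eq h₁ h₂ h₃ h₄,
    pairFactor_eq (by contrapose! h₅; linear_combination h₅) (by contrapose! h₆; linear_combination h₆)
      (by contrapose! h₈; linear_combination -h₈) (by contrapose! h₇; linear_combination -h₇),
    sub_sub_cancel]
  ring

theorem mul_singleFactor_neg (a b c d v : ℂ) :
    (a + v) * (b + v) / (2 * v) * singleFactor a b c d v
      = (a - v) * (b - v) / (-2 * v) * singleFactor a b c d (-v) := by
  simp only [singleFactor, Gpm_neg_right, mul_neg, neg_neg]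
  ring

theorem mul_singleFactor_eq {a b c d v : ℂ} (ha : a - v ≠ 0) (hb : b - v ≠ 0) (hc : c - v ≠ 0)
    (hd : d - v ≠ 0) (h₀ : 2 * v ≠ 0) (h₁ : 2 * v ≠ 1) :
    (c - v) * (d - v) / (1 - 2 * v) * singleFactor a b c d v
      = Complex.Gamma (a + v) * Complex.Gamma (a + (1 - v))
          * (Complex.Gamma (b + v) * Complex.Gamma (b + (1 - v)))
          * (Complex.Gamma (c + v) * Complex.Gamma (c + (1 - v)))
          * (Complex.Gamma (d + v) * Complex.Gamma (d + (1 - v)))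
          / (Complex.Gamma (2 * v) * Complex.Gamma (2 * (1 - v))) := by
  calc _ = (a - v) * Gpm a v * ((b - v) * Gpm b v) * ((c - v) * Gpm c v) * ((d - v) * Gpm d v)
          / ((1 - 2 * v) * (-2 * v)
            * (Complex.Gamma (2 * v) * Complex.Gamma (-(2 * v)))) := by
          simp only [singleFactor, div_mul_div_comm]; ring
    _ = _ := by
      rw [sub_mul_Gpm ha, sub_mul_Gpm hb, sub_mul_Gpm hc, sub_mul_Gpm hd,
        mul_Gamma_mul_Gamma_neg h₀ h₁]

theorem mul_singleFactor_one_sub {a b c d v : ℂ} (ha : a - v ≠ 0) (hb : b - v ≠ 0)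
    (hc : c - v ≠ 0) (hd : d - v ≠ 0) (ha' : a + v ≠ 1) (hb' : b + v ≠ 1) (hc' : c + v ≠ 1)
    (hd' : d + v ≠ 1) (h₀ : 2 * v ≠ 0) (h₁ : 2 * v ≠ 1) (h₂ : 2 * v ≠ 2) :
    (c - (1 - v)) * (d - (1 - v)) / (1 - 2 * (1 - v)) * singleFactor a b c d (1 - v)
      = (c - v) * (d - v) / (1 - 2 * v) * singleFactor a b c d v := by
  have hsub : ∀ {p : ℂ}, p + v ≠ 1 → p - (1 - v) ≠ 0 := fun h => by
    rwa [sub_sub_eq_add_sub, sub_ne_zero]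
  rw [mul_singleFactor_eq (hsub ha') (hsub hb') (hsub hc') (hsub hd')
      (by contrapose! h₂; linear_combination -h₂) (by contrapose! h₁; linear_combination -h₁),
    mul_singleFactor_eq ha hb hc hd h₀ h₁, sub_sub_cancel]
  ring

theorem Dfull_update (n : ℕ) (a b c d t : ℂ) (x : Fin n → ℂ) (i : Fin n) :
    ∃ R, ∀ v, Dfull n a b c d t (update x i v)
      = (∏ l ∈ Iio i, pairFactor t (x l) v) * (∏ k ∈ Ioi i, pairFactor t v (x k))
          * singleFactor a b c d v * R := by
  obtain ⟨R, hR⟩ := pairProd_update (pairFactor t) x i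
  refine ⟨R * ∏ j ∈ univ \ {i}, singleFactor a b c d (x j), fun v => ?_⟩
  have hsingle : (fun j => singleFactor a b c d (update x i v j))
      = update (fun j => singleFactor a b c d (x j)) i (singleFactor a b c d v) :=
    funext (apply_update (fun _ => singleFactor a b c d) x i v)
  rw [Dfull_eq_pairProd_mul_prod, hR, hsingle, prod_update_of_mem (mem_univ i)]
  ring

theorem mul_Dfull_comp_swap (n : ℕ) (a b c d t : ℂ) {i j : Fin n} (hij : (i : ℕ) + 1 = j)
    (x : Fin n → ℂ) :
    (t + x i - x j) / (x i - x j) * Dfull n a b c d t x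
      = (t + x j - x i) / (x j - x i) * Dfull n a b c d t (x ∘ Equiv.swap i j) := by
  obtain ⟨R, hx, hsx⟩ := pairProd_comp_swap_of_succ (pairFactor t) x hij
  have hsingle : ∏ l, singleFactor a b c d ((x ∘ Equiv.swap i j) l)
      = ∏ l, singleFactor a b c d (x l) :=
    Equiv.prod_comp _ fun l => singleFactor a b c d (x l)
  rw [Dfull_eq_pairProd_mul_prod, Dfull_eq_pairProd_mul_prod, hx, hsx, hsingle]
  linear_combination (R * ∏ l, singleFactor a b c d (x l)) * pairFactor_swap t (x i) (x j)

theorem mul_Dfull_update_neg (n : ℕ) (a b c d t : ℂ) {i : Fin n} (hi : IsMax i)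
    (x : Fin n → ℂ) :
    (a + x i) * (b + x i) / (2 * x i) * Dfull n a b c d t x
      = (a - x i) * (b - x i) / (-2 * x i) * Dfull n a b c d t (update x i (-x i)) := by
  obtain ⟨R, hR⟩ := Dfull_update n a b c d t x i
  have hx := hR (x i)
  rw [update_eq_self] at hx
  rw [hx, hR, hi.finsetIoi_eq, prod_empty, prod_empty]
  simp only [pairFactor_neg_right]
  linear_combination (∏ l ∈ Iio i, pairFactor t (x l) (x i)) * R * mul_singleFactor_neg a b c d (x i)

theorem mul_Dfull_update_one_sub (n : ℕ) (a b c d t : ℂ) {i : Fin n} (hi : IsMin i)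
    (x : Fin n → ℂ) (h2x : ∀ m : ℤ, 2 * x i ≠ m)
    (hpair : ∀ k, k ≠ i → ∀ m : ℤ,
      x i + x k ≠ m ∧ x i - x k ≠ m ∧ t + x i + x k ≠ m ∧ t + x i - x k ≠ m ∧
        t - x i + x k ≠ m ∧ t - x i - x k ≠ m)
    (hsingle : ∀ m : ℤ, a + x i ≠ m ∧ a - x i ≠ m ∧ b + x i ≠ m ∧ b - x i ≠ m ∧
      c + x i ≠ m ∧ c - x i ≠ m ∧ d + x i ≠ m ∧ d - x i ≠ m) :
    (c - x i) * (d - x i) / (1 - 2 * x i) * Dfull n a b c d t x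
      = (c - (1 - x i)) * (d - (1 - x i)) / (1 - 2 * (1 - x i))
          * Dfull n a b c d t (update x i (1 - x i)) := by
  obtain ⟨R, hR⟩ := Dfull_update n a b c d t x i
  have hx := hR (x i)
  rw [update_eq_self] at hx
  have hpairs : ∏ k ∈ Ioi i, pairFactor t (1 - x i) (x k) = ∏ k ∈ Ioi i, pairFactor t (x i) (x k) :=
    prod_congr rfl fun k hk => by
      obtain ⟨h₁, h₂, -, -, h₅, h₆⟩ := hpair k (mem_Ioi.1 hk).ne' 0
      obtain ⟨h₇, h₈, h₃, h₄, -, -⟩ := hpair k (mem_Ioi.1 hk).ne' 1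
      simp only [Int.cast_zero, Int.cast_one] at *
      exact pairFactor_one_sub h₅ h₆ h₁ h₂ h₃ h₄ h₇ h₈
  obtain ⟨-, ha, -, hb, -, hc, -, hd⟩ := hsingle 0
  obtain ⟨ha', -, hb', -, hc', -, hd', -⟩ := hsingle 1
  simp only [Int.cast_zero, Int.cast_one] at *
  have hc0 := mul_singleFactor_one_sub ha hb hc hd ha' hb' hc' hd'
    (by exact_mod_cast h2x 0) (by exact_mod_cast h2x 1) (by exact_mod_cast h2x 2)
  rw [hx, hR, hi.finsetIio_eq, prod_empty, prod_empty, hpairs]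
  linear_combination -((∏ k ∈ Ioi i, pairFactor t (x i) (x k)) * R) * hc0

/-- The c-functions are `c₀(x) = (c−x₁)(d−x₁)/(1−2x₁)`, `c_i(x) = (t+x_i−x_{i+1})/(x_i−x_{i+1})`
and `cₙ(x) = (a+xₙ)(b+xₙ)/(2xₙ)`. -/
theorem stmt16 (n : ℕ) (hn : 0 < n) (t a b c d : ℂ) :
    -- middle reflections s_i, 1 ≤ i ≤ n-1
    (∀ i j : Fin n, (i : ℕ) + 1 = (j : ℕ) → ∀ x : Fin n → ℂ,
      (∀ l, x l ≠ 0) → (∀ l m : Fin n, l ≠ m → (x l) ^ 2 ≠ (x m) ^ 2) →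
      ((t + x i - x j) / (x i - x j)) * Dfull n a b c d t x
        = ((t + (x ∘ Equiv.swap i j) i - (x ∘ Equiv.swap i j) j)
            / ((x ∘ Equiv.swap i j) i - (x ∘ Equiv.swap i j) j))
            * Dfull n a b c d t (x ∘ Equiv.swap i j)) ∧
    -- the reflection sₙ negating xₙ
    (∀ x : Fin n → ℂ,
      (∀ l, x l ≠ 0) → (∀ l m : Fin n, l ≠ m → (x l) ^ 2 ≠ (x m) ^ 2) →
      ((a + x ⟨n - 1, by omega⟩) * (b + x ⟨n - 1, by omega⟩) / (2 * x ⟨n - 1, by omega⟩))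
          * Dfull n a b c d t x
        = ((a - x ⟨n - 1, by omega⟩) * (b - x ⟨n - 1, by omega⟩) / (-2 * x ⟨n - 1, by omega⟩))
            * Dfull n a b c d t
                (Function.update x ⟨n - 1, by omega⟩ (-(x ⟨n - 1, by omega⟩)))) ∧
    -- the affine reflection s₀ : x₁ ↦ 1 − x₁
    (∀ x : Fin n → ℂ,
      (∀ l, x l ≠ 0) → (∀ l m : Fin n, l ≠ m → (x l) ^ 2 ≠ (x m) ^ 2) →
      (∀ m : ℤ, 2 * x ⟨0, hn⟩ ≠ (m : ℂ)) →
      (∀ k : Fin n, k ≠ ⟨0, hn⟩ → ∀ m : ℤ,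
        x ⟨0, hn⟩ + x k ≠ (m : ℂ) ∧ x ⟨0, hn⟩ - x k ≠ (m : ℂ) ∧
        t + x ⟨0, hn⟩ + x k ≠ (m : ℂ) ∧ t + x ⟨0, hn⟩ - x k ≠ (m : ℂ) ∧
        t - x ⟨0, hn⟩ + x k ≠ (m : ℂ) ∧ t - x ⟨0, hn⟩ - x k ≠ (m : ℂ)) →
      (∀ m : ℤ, a + x ⟨0, hn⟩ ≠ (m : ℂ) ∧ a - x ⟨0, hn⟩ ≠ (m : ℂ) ∧
        b + x ⟨0, hn⟩ ≠ (m : ℂ) ∧ b - x ⟨0, hn⟩ ≠ (m : ℂ) ∧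
        c + x ⟨0, hn⟩ ≠ (m : ℂ) ∧ c - x ⟨0, hn⟩ ≠ (m : ℂ) ∧
        d + x ⟨0, hn⟩ ≠ (m : ℂ) ∧ d - x ⟨0, hn⟩ ≠ (m : ℂ)) →
      ((c - x ⟨0, hn⟩) * (d - x ⟨0, hn⟩) / (1 - 2 * x ⟨0, hn⟩)) * Dfull n a b c d t x
        = ((c - (1 - x ⟨0, hn⟩)) * (d - (1 - x ⟨0, hn⟩)) / (1 - 2 * (1 - x ⟨0, hn⟩)))
            * Dfull n a b c d t (Function.update x ⟨0, hn⟩ (1 - x ⟨0, hn⟩))) := by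
  have hmax : IsMax (⟨n - 1, by omega⟩ : Fin n) := fun k _ => Fin.le_def.2 (by simp only; omega)
  have hmin : IsMin (⟨0, hn⟩ : Fin n) := fun k _ => Fin.le_def.2 (Nat.zero_le _)
  refine ⟨fun i j hij x _ _ => ?_, fun x _ _ => mul_Dfull_update_neg n a b c d t hmax x,
    fun x _ _ => mul_Dfull_update_one_sub n a b c d t hmin x⟩
  simpa only [comp_apply, Equiv.swap_apply_left, Equiv.swap_apply_right]
    using mul_Dfull_comp_swap n a b c d t hij x
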